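/- Let f : ℝ² → ℝ be a weighted homogeneous polynomial of type (d; w₁, w₂) with w₁ ≥ w₂, and suppose the origin is an isolated zero of ∂f/∂x₁, i.e. there is a neighborhood of 0 in which ∂f/∂x₁ vanishes only at the origin. Then there exist C > 0 and a neighborhood U of 0 such that ‖∇f(x)‖ ≥ C‖x‖^{(d−w₁)/w₂} for all x ∈ U. -/

import Mathlib

/-!
The partial derivative `g = ∂f/∂x₁` is weighted homogeneous of degree `d - w₁`. Since its
zero at the origin is isolated and `g (t • x) = t ^ (d - w₁) g x` along the weighted orbits
`t • x = (t ^ w₁ x₁, t ^ w₂ x₂)`, which all run into the origin, `g` vanishes nowhere else;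
so `|g| ≥ C > 0` on the unit sphere. Every `x` in the unit ball is `t • u` with `u` on the
sphere and `t ∈ [0, 1]`, and then `‖x‖ ≤ t ^ w₂`, whence
`‖∇f x‖ ≥ |g x| = t ^ (d - w₁) |g u| ≥ C ‖x‖ ^ ((d - w₁) / w₂)`.
-/

open MvPolynomial

/-- Euclidean norm of the gradient of a polynomial `f` at `x`. -/
noncomputable def gradNorm {n : ℕ} (f : MvPolynomial (Fin n) ℝ) (x : Fin n → ℝ) : ℝ :=
  Real.sqrt (∑ i, (eval x (pderiv i f)) ^ 2)

/-- Euclidean norm on `Fin n → ℝ`. -/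
noncomputable def eNorm {n : ℕ} (x : Fin n → ℝ) : ℝ :=
  Real.sqrt (∑ i, (x i) ^ 2)

/-- `f` is weighted homogeneous of type `(d; w)`: every monomial `x^α` appearing in `f`
satisfies `∑ i, α i * w i = d`. -/
def IsWeightedHomog {n : ℕ} (f : MvPolynomial (Fin n) ℝ) (w : Fin n → ℕ) (d : ℕ) : Prop :=
  ∀ α ∈ f.support, ∑ i, α i * w i = d

/-- `f` is non-degenerate (isolated singularity at the origin): in some neighborhood of `0`
the gradient of `f` vanishes only at the origin. -/
def Nondeg {n : ℕ} (f : MvPolynomial (Fin n) ℝ) : Prop :=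
  ∃ U ∈ nhds (0 : Fin n → ℝ), ∀ x ∈ U, (∀ i, eval x (pderiv i f) = 0) → x = 0

/-- The Łojasiewicz inequality `‖∇f(x)‖ ≥ C ‖x‖^lam` holds near `0` for some `C > 0`. -/
def LojIneq {n : ℕ} (f : MvPolynomial (Fin n) ℝ) (lam : ℝ) : Prop :=
  ∃ C > (0 : ℝ), ∃ U ∈ nhds (0 : Fin n → ℝ), ∀ x ∈ U, C * eNorm x ^ lam ≤ gradNorm f x

/-- The Łojasiewicz exponent of `f`: the infimum of all `lam > 0` for which the
Łojasiewicz inequality holds near the origin. -/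
noncomputable def lojExp {n : ℕ} (f : MvPolynomial (Fin n) ℝ) : ℝ :=
  sInf {lam : ℝ | 0 < lam ∧ LojIneq f lam}

/-- The weighted "radius" `ρ(x) = (∑ i |x i| ^ (2 / w i)) ^ (1/2)`. -/
noncomputable def rho {n : ℕ} (w : Fin n → ℕ) (x : Fin n → ℝ) : ℝ :=
  Real.sqrt (∑ i, |x i| ^ ((2 : ℝ) / (w i : ℝ)))

/-- The weighted norm of the gradient:
`‖grad_w f(x)‖_w = (∑ i ρ(x)^(2 wᵢ) |∂f/∂xᵢ(x)|²)^(1/2)`. -/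
noncomputable def wGradNorm {n : ℕ} (w : Fin n → ℕ) (f : MvPolynomial (Fin n) ℝ)
    (x : Fin n → ℝ) : ℝ :=
  Real.sqrt (∑ i, rho w x ^ (2 * w i) * (eval x (pderiv i f)) ^ 2)

lemma eNorm_sq {n : ℕ} (x : Fin n → ℝ) : eNorm x ^ 2 = ∑ i, x i ^ 2 :=
  Real.sq_sqrt (Finset.sum_nonneg fun i _ => sq_nonneg (x i))

lemma eNorm_zero {n : ℕ} : eNorm (0 : Fin n → ℝ) = 0 := by
  simp [eNorm]

lemma eNorm_single {n : ℕ} (j : Fin n) : eNorm (Pi.single j 1 : Fin n → ℝ) = 1 := by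
  rw [eNorm, Fintype.sum_eq_single j fun i hi => by simp [hi]]
  simp

lemma continuous_eNorm {n : ℕ} : Continuous (eNorm (n := n)) := by
  unfold eNorm
  fun_prop

lemma abs_le_eNorm {n : ℕ} (x : Fin n → ℝ) (i : Fin n) : |x i| ≤ eNorm x :=
  Real.abs_le_sqrt (Finset.single_le_sum (fun j _ => sq_nonneg (x j)) (Finset.mem_univ i))

lemma isCompact_eNorm_eq_one {n : ℕ} : IsCompact {u : Fin n → ℝ | eNorm u = 1} := by
  refine (isCompact_closedBall 0 1).of_isClosed_subset
    (isClosed_eq continuous_eNorm continuous_const) fun u hu => ?_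
  rw [mem_closedBall_zero_iff, pi_norm_le_iff_of_nonneg zero_le_one]
  exact fun i => (abs_le_eNorm u i).trans_eq hu

lemma abs_eval_pderiv_le_gradNorm {n : ℕ} (f : MvPolynomial (Fin n) ℝ) (x : Fin n → ℝ)
    (i : Fin n) : |eval x (pderiv i f)| ≤ gradNorm f x :=
  abs_le_eNorm (fun j => eval x (pderiv j f)) i

def weightedSmul {n : ℕ} (w : Fin n → ℕ) (t : ℝ) (x : Fin n → ℝ) : Fin n → ℝ :=
  fun i => t ^ w i * x i

lemma continuous_weightedSmul_left {n : ℕ} (w : Fin n → ℕ) (x : Fin n → ℝ) :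
    Continuous fun t => weightedSmul w t x := by
  unfold weightedSmul
  fun_prop

lemma weightedSmul_zero_left {n : ℕ} {w : Fin n → ℕ} (hw : ∀ i, 0 < w i) (x : Fin n → ℝ) :
    weightedSmul w 0 x = 0 := by
  ext i
  simp [weightedSmul, (hw i).ne']

lemma weightedSmul_eq_zero_iff {n : ℕ} (w : Fin n → ℕ) {t : ℝ} (ht : t ≠ 0) {x : Fin n → ℝ} :
    weightedSmul w t x = 0 ↔ x = 0 := by
  simp [funext_iff, weightedSmul, ht]

lemma eNorm_weightedSmul_le {n : ℕ} {w : Fin n → ℕ} {k : ℕ} (hk : ∀ i, k ≤ w i) {t : ℝ}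
    (ht₀ : 0 ≤ t) (ht₁ : t ≤ 1) (x : Fin n → ℝ) :
    eNorm (weightedSmul w t x) ≤ t ^ k * eNorm x := by
  have hsq : ∑ i, (t ^ w i * x i) ^ 2 ≤ (t ^ k) ^ 2 * ∑ i, x i ^ 2 := by
    rw [Finset.mul_sum]
    refine Finset.sum_le_sum fun i _ => ?_
    rw [mul_pow]
    exact mul_le_mul_of_nonneg_right
      (pow_le_pow_left₀ (by positivity) (pow_le_pow_of_le_one ht₀ ht₁ (hk i)) 2) (sq_nonneg _)
  calc eNorm (weightedSmul w t x) ≤ Real.sqrt ((t ^ k) ^ 2 * ∑ i, x i ^ 2) :=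
        Real.sqrt_le_sqrt hsq
    _ = t ^ k * eNorm x := by
        rw [Real.sqrt_mul (by positivity), Real.sqrt_sq (by positivity), eNorm]

lemma exists_eq_weightedSmul_of_eNorm_le_one {n : ℕ} [NeZero n] {w : Fin n → ℕ}
    (hw : ∀ i, 0 < w i) {x : Fin n → ℝ} (hx : eNorm x ≤ 1) :
    ∃ t ∈ Set.Icc (0 : ℝ) 1, ∃ u, eNorm u = 1 ∧ x = weightedSmul w t u := by
  rcases eq_or_ne x 0 with rfl | hx0
  · exact ⟨0, ⟨le_rfl, zero_le_one⟩, Pi.single 0 1, eNorm_single 0,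
      (weightedSmul_zero_left hw _).symm⟩
  set a := eNorm x
  have ha : 0 < a := by
    obtain ⟨i, hi⟩ := Function.ne_iff.mp hx0
    exact (abs_pos.mpr hi).trans_le (abs_le_eNorm x i)
  -- `F t = ‖t⁻¹ • x‖ ^ 2`; a solution of `F t = 1` in `[a, 1]` gives the decomposition.
  set F : ℝ → ℝ := fun t => ∑ i, (x i / t ^ w i) ^ 2
  have hF : ContinuousOn F (Set.Icc a 1) := by
    refine continuousOn_finsetSum _ fun i _ =>
      (continuousOn_const.div (continuous_pow _).continuousOn fun t ht => ?_).pow 2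
    exact pow_ne_zero _ (ha.trans_le ht.1).ne'
  have hF₁ : F 1 ≤ 1 := by
    simp only [F, one_pow, div_one, ← eNorm_sq]
    exact pow_le_one₀ ha.le hx
  have hFa : 1 ≤ F a := by
    calc (1 : ℝ) = ∑ i, x i ^ 2 / a ^ 2 := by
          rw [← Finset.sum_div, ← eNorm_sq, div_self (by positivity)]
      _ ≤ F a := Finset.sum_le_sum fun i _ => by
          rw [div_pow]
          exact div_le_div_of_nonneg_left (sq_nonneg _) (by positivity)
            (pow_le_pow_left₀ (by positivity) (pow_le_of_le_one ha.le hx (hw i).ne') 2)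
  obtain ⟨t, ht, hFt⟩ := intermediate_value_Icc' hx hF ⟨hF₁, hFa⟩
  have ht₀ : 0 < t := ha.trans_le ht.1
  refine ⟨t, ⟨ht₀.le, ht.2⟩, fun i => x i / t ^ w i, ?_, ?_⟩
  · rw [eNorm, Real.sqrt_eq_one]
    exact hFt
  · ext i
    simp only [weightedSmul]
    field_simp

namespace IsWeightedHomog

variable {n : ℕ} {w : Fin n → ℕ} {d : ℕ} {f : MvPolynomial (Fin n) ℝ}

lemma eval_weightedSmul (hf : IsWeightedHomog f w d) (t : ℝ) (x : Fin n → ℝ) :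
    eval (weightedSmul w t x) f = t ^ d * eval x f := by
  conv_lhs => rw [f.as_sum]
  conv_rhs => rw [f.as_sum]
  rw [map_sum, map_sum, Finset.mul_sum]
  refine Finset.sum_congr rfl fun α hα => ?_
  have hprod : ∏ i, (t ^ w i * x i) ^ α i = t ^ d * ∏ i, x i ^ α i := by
    rw [← hf α hα, ← Finset.prod_pow_eq_pow_sum, ← Finset.prod_mul_distrib]
    exact Finset.prod_congr rfl fun i _ => by rw [mul_pow, ← pow_mul, mul_comm (w i)]
  simp only [eval_monomial, Finsupp.prod_fintype _ _ (fun i => pow_zero _), weightedSmul, hprod]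
  ring

lemma weight_add_of_mem_support_pderiv (hf : IsWeightedHomog f w d) (j : Fin n)
    {α : Fin n →₀ ℕ} (hα : α ∈ (pderiv j f).support) : ∑ i, α i * w i + w j = d := by
  rw [mem_support_iff, coeff_pderiv] at hα
  rw [← hf _ (mem_support_iff.mpr (left_ne_zero_of_mul hα))]
  simp [add_mul, Finset.sum_add_distrib, Finsupp.single_apply]

lemma le_of_pderiv_ne_zero (hf : IsWeightedHomog f w d) {j : Fin n} (hj : pderiv j f ≠ 0) :
    w j ≤ d := by
  obtain ⟨α, hα⟩ := support_nonempty.mpr hj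
  have := hf.weight_add_of_mem_support_pderiv j hα
  omega

/-- The weighted orbit `t ↦ t • p` of a zero `p` consists of zeros and runs into the origin. -/
lemma eval_ne_zero (hf : IsWeightedHomog f w d) (hw : ∀ i, 0 < w i)
    (hiso : ∃ U ∈ nhds (0 : Fin n → ℝ), ∀ x ∈ U, eval x f = 0 → x = 0)
    {p : Fin n → ℝ} (hp : p ≠ 0) : eval p f ≠ 0 := by
  intro hfp
  obtain ⟨U, hU, hUf⟩ := hiso
  have horbit : Filter.Tendsto (fun t => weightedSmul w t p) (nhdsWithin 0 (Set.Ioi 0))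
      (nhds 0) := by
    simpa [weightedSmul_zero_left hw] using
      ((continuous_weightedSmul_left w p).tendsto 0).mono_left nhdsWithin_le_nhds
  obtain ⟨t, htU, ht⟩ := ((horbit.eventually_mem hU).and self_mem_nhdsWithin).exists
  refine hp ((weightedSmul_eq_zero_iff w (Set.mem_Ioi.mp ht).ne').mp (hUf _ htU ?_))
  rw [hf.eval_weightedSmul, hfp, mul_zero]

theorem exists_pos_mul_eNorm_rpow_le_abs_eval [NeZero n] (hf : IsWeightedHomog f w d)
    {k : ℕ} (hk : 0 < k) (hkw : ∀ i, k ≤ w i)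
    (hiso : ∃ U ∈ nhds (0 : Fin n → ℝ), ∀ x ∈ U, eval x f = 0 → x = 0) :
    ∃ C > (0 : ℝ), ∃ U ∈ nhds (0 : Fin n → ℝ), ∀ x ∈ U,
      C * eNorm x ^ ((d : ℝ) / k) ≤ |eval x f| := by
  have hw : ∀ i, 0 < w i := fun i => hk.trans_le (hkw i)
  obtain ⟨C, hC, hCS⟩ := isCompact_eNorm_eq_one.exists_forall_le'
    (continuous_eval f).abs.continuousOn fun u (hu : eNorm u = 1) =>
      abs_pos.mpr (hf.eval_ne_zero hw hiso fun h => by simp [h, eNorm_zero] at hu)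
  refine ⟨C, hC, eNorm ⁻¹' Set.Iic 1, continuous_eNorm.continuousAt.preimage_mem_nhds
    (Iic_mem_nhds (by simp [eNorm_zero])), fun x hx => ?_⟩
  obtain ⟨t, ⟨ht₀, ht₁⟩, u, hu, rfl⟩ := exists_eq_weightedSmul_of_eNorm_le_one hw hx
  have hnorm : eNorm (weightedSmul w t u) ≤ t ^ k := by
    simpa [hu] using eNorm_weightedSmul_le hkw ht₀ ht₁ u
  have hpow : (t ^ k) ^ ((d : ℝ) / k) = t ^ d := by
    rw [← Real.rpow_natCast, ← Real.rpow_mul ht₀, mul_div_cancel₀ _ (by positivity),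
      Real.rpow_natCast]
  calc C * eNorm (weightedSmul w t u) ^ ((d : ℝ) / k) ≤ C * t ^ d := by
        gcongr
        exact (Real.rpow_le_rpow (Real.sqrt_nonneg _) hnorm (by positivity)).trans_eq hpow
    _ ≤ |eval u f| * t ^ d := by gcongr; exact hCS u hu
    _ = |eval (weightedSmul w t u) f| := by
        rw [hf.eval_weightedSmul, abs_mul, abs_of_nonneg (pow_nonneg ht₀ d), mul_comm]

lemma pderiv (hf : IsWeightedHomog f w d) (j : Fin n) :
    IsWeightedHomog (MvPolynomial.pderiv j f) w (d - w j) := fun α hα => by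
  have := hf.weight_add_of_mem_support_pderiv j hα
  omega

end IsWeightedHomog

theorem stmt7_general (d w₁ w₂ : ℕ) (hw₂ : 0 < w₂) (hw : w₂ ≤ w₁)
    (f : MvPolynomial (Fin 2) ℝ)
    (hhom : IsWeightedHomog f ![w₁, w₂] d)
    (hiso : ∃ U ∈ nhds (0 : Fin 2 → ℝ), ∀ x ∈ U,
      eval x (pderiv 0 f) = 0 → x = 0) :
    ∃ C > (0 : ℝ), ∃ U ∈ nhds (0 : Fin 2 → ℝ), ∀ x ∈ U,
      C * eNorm x ^ (((d : ℝ) - w₁) / w₂) ≤ gradNorm f x := by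
  have hkw : ∀ i, w₂ ≤ ![w₁, w₂] i := Fin.forall_fin_two.mpr ⟨hw, le_rfl⟩
  have hg : IsWeightedHomog (pderiv 0 f) ![w₁, w₂] (d - w₁) := hhom.pderiv 0
  have hg₀ : pderiv 0 f ≠ 0 := fun h =>
    hg.eval_ne_zero (fun i => hw₂.trans_le (hkw i)) hiso (p := Pi.single 0 1)
      (Pi.single_ne_zero_iff.mpr one_ne_zero)
      (by simp [h])
  have hw₁d : w₁ ≤ d := hhom.le_of_pderiv_ne_zero hg₀
  obtain ⟨C, hC, U, hU, hCU⟩ := hg.exists_pos_mul_eNorm_rpow_le_abs_eval hw₂ hkw hiso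
  refine ⟨C, hC, U, hU, fun x hx => ?_⟩
  rw [← Nat.cast_sub hw₁d]
  exact (hCU x hx).trans (abs_eval_pderiv_le_gradNorm f x 0)

theorem stmt7 (d w₁ w₂ : ℕ) (hd : 0 < d) (hw₂ : 0 < w₂) (hw : w₂ ≤ w₁)
    (f : MvPolynomial (Fin 2) ℝ)
    (hhom : IsWeightedHomog f ![w₁, w₂] d)
    (hiso : ∃ U ∈ nhds (0 : Fin 2 → ℝ), ∀ x ∈ U,
      eval x (pderiv 0 f) = 0 → x = 0) :
    ∃ C > (0 : ℝ), ∃ U ∈ nhds (0 : Fin 2 → ℝ), ∀ x ∈ U,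
      C * eNorm x ^ (((d : ℝ) - w₁) / w₂) ≤ gradNorm f x :=
  stmt7_general d w₁ w₂ hw₂ hw f hhom hiso
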